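/- arXiv:2006.11443 — 3 statements merged into one kernel-verified Lean document; each statement's English description precedes it below -/
import Mathlib

section
/- Let σ² > 0, v ≥ 0 and F ∈ ℂ, let C = [[v + σ², v·conj(F)], [v·F, v·|F|² + σ²]], let μ₁ = v·(1+|F|²) + σ², e₁ = (1/√(1+|F|²))·(1, F) and e₂ = (1/√(1+|F|²))·(−conj(F), 1). Then C = μ₁·e₁e₁^H + σ²·e₂e₂^H, C is invertible, and C⁻¹ = μ₁⁻¹·e₁e₁^H + σ⁻²·e₂e₂^H, where e·e^H denotes the 2×2 rank-one matrix with (i,j) entry eᵢ·conj(eⱼ). -/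
/-!
With `u = (1, F)` the covariance is the rank-one perturbation `C = v • u uᴴ + σ² • 1`.
Since `w = (-conj F, 1)` is orthogonal to `u` with the same squared norm `1 + |F|²`, the
matrix `P = e₁ e₁ᴴ` is an idempotent with complement `1 - P = e₂ e₂ᴴ`, and
`C = μ₁ • P + σ² • (1 - P)`. Spectral decompositions over complementary idempotents are
inverted by inverting the two eigenvalues, both of which are positive.
-/

open Complex Matrix

theorem IsIdempotentElem.smul_add_smul_one_sub_mul_inv {K R : Type*} [Field K] [Ring R]
    [Algebra K R] {P : R} (hP : IsIdempotentElem P) {a b : K} (ha : a ≠ 0) (hb : b ≠ 0) :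
    (a • P + b • (1 - P)) * (a⁻¹ • P + b⁻¹ • (1 - P)) = 1 := by
  simp only [add_mul, mul_add, smul_mul_smul, hP.eq, hP.one_sub.eq, hP.mul_one_sub_self,
    hP.one_sub_mul_self, mul_inv_cancel₀ ha, mul_inv_cancel₀ hb, smul_zero, one_smul]
  abel

theorem Matrix.isIdempotentElem_vecMulVec {n α : Type*} [Fintype n] [CommSemiring α]
    {u v : n → α} (h : v ⬝ᵥ u = 1) : IsIdempotentElem (vecMulVec u v) := by
  rw [IsIdempotentElem, vecMulVec_mul_vecMulVec, h, one_smul]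

theorem Matrix.vecMulVec_smul_star_smul {n α : Type*} [CommRing α] [StarRing α] (c : α)
    (u : n → α) : vecMulVec (c • u) (star (c • u)) = (c * star c) • vecMulVec u (star u) := by
  rw [star_smul, smul_vecMulVec, vecMulVec_smul, smul_smul]

theorem Complex.ofReal_sqrt_inv_mul_star {t : ℝ} (ht : 0 ≤ t) :
    ((Real.sqrt t : ℂ))⁻¹ * star ((Real.sqrt t : ℂ))⁻¹ = ((t⁻¹ : ℝ) : ℂ) := by
  rw [star_inv₀, Complex.star_def, conj_ofReal, ← mul_inv, ← ofReal_mul, Real.mul_self_sqrt ht,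
    ofReal_inv]

theorem star_dotProduct_one_cons_self (F : ℂ) :
    star ![1, F] ⬝ᵥ ![1, F] = ((1 + ‖F‖ ^ 2 : ℝ) : ℂ) := by
  simp [dotProduct, Fin.sum_univ_two, ← mul_conj']
  ring

theorem vecMulVec_one_cons_add_vecMulVec_orthogonal (F : ℂ) :
    vecMulVec ![1, F] (star ![1, F])
        + vecMulVec ![-starRingEnd ℂ F, 1] (star ![-starRingEnd ℂ F, 1])
      = ((1 + ‖F‖ ^ 2 : ℝ) : ℂ) • (1 : Matrix (Fin 2) (Fin 2) ℂ) := by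
  ext i j
  simp only [Matrix.add_apply, Matrix.smul_apply, vecMulVec_apply]
  fin_cases i <;> fin_cases j <;> simp [← mul_conj'] <;> ring

theorem covariance_eq_smul_vecMulVec_add_smul_one (σ2 v : ℝ) (F : ℂ) :
    !![(v : ℂ) + σ2, (v : ℂ) * (starRingEnd ℂ) F; (v : ℂ) * F, (v : ℂ) * (‖F‖ : ℂ) ^ 2 + σ2]
      = (v : ℂ) • vecMulVec ![1, F] (star ![1, F]) + (σ2 : ℂ) • 1 := by
  ext i j
  simp only [Matrix.add_apply, Matrix.smul_apply, vecMulVec_apply]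
  fin_cases i <;> fin_cases j <;> simp [← mul_conj']

/-- With C, μ₁, e₁, e₂ as in the single-packet covariance model,
C = μ₁·e₁e₁ᴴ + σ²·e₂e₂ᴴ, C is invertible, and C⁻¹ = μ₁⁻¹·e₁e₁ᴴ + σ⁻²·e₂e₂ᴴ,
where e·eᴴ is the rank-one matrix with (i,j) entry eᵢ·conj(eⱼ). -/
theorem stmt1 (σ2 v : ℝ) (hσ : 0 < σ2) (hv : 0 ≤ v) (F : ℂ)
    (C : Matrix (Fin 2) (Fin 2) ℂ)
    (hC : C = !![(v : ℂ) + σ2, (v : ℂ) * (starRingEnd ℂ) F;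
                 (v : ℂ) * F, (v : ℂ) * (‖F‖ : ℂ) ^ 2 + σ2])
    (μ₁ : ℝ) (hμ₁ : μ₁ = v * (1 + ‖F‖ ^ 2) + σ2)
    (e₁ e₂ : Fin 2 → ℂ)
    (he₁ : e₁ = ((Real.sqrt (1 + ‖F‖ ^ 2) : ℂ))⁻¹ • ![1, F])
    (he₂ : e₂ = ((Real.sqrt (1 + ‖F‖ ^ 2) : ℂ))⁻¹ • ![-(starRingEnd ℂ) F, 1]) :
    C = ((μ₁ : ℝ) : ℂ) • Matrix.vecMulVec e₁ (star e₁)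
        + ((σ2 : ℝ) : ℂ) • Matrix.vecMulVec e₂ (star e₂) ∧
    IsUnit C ∧
    C⁻¹ = ((μ₁⁻¹ : ℝ) : ℂ) • Matrix.vecMulVec e₁ (star e₁)
        + ((σ2⁻¹ : ℝ) : ℂ) • Matrix.vecMulVec e₂ (star e₂) := by
  set t : ℝ := 1 + ‖F‖ ^ 2
  have ht : 0 < t := by positivity
  set P := vecMulVec e₁ (star e₁) with hP_def
  have hP : P = vecMulVec (((t⁻¹ : ℝ) : ℂ) • ![1, F]) (star ![1, F]) := by
    rw [hP_def, he₁, vecMulVec_smul_star_smul, ofReal_sqrt_inv_mul_star ht.le, smul_vecMulVec]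
  have hP_idem : IsIdempotentElem P := by
    refine hP ▸ isIdempotentElem_vecMulVec ?_
    rw [dotProduct_smul, star_dotProduct_one_cons_self, smul_eq_mul, ← ofReal_mul,
      inv_mul_cancel₀ ht.ne', ofReal_one]
  have hQ : vecMulVec e₂ (star e₂) = 1 - P := by
    rw [eq_sub_iff_add_eq', hP, he₂, vecMulVec_smul_star_smul, ofReal_sqrt_inv_mul_star ht.le,
      smul_vecMulVec, ← smul_add, vecMulVec_one_cons_add_vecMulVec_orthogonal, smul_smul,
      ← ofReal_mul, inv_mul_cancel₀ ht.ne', ofReal_one, one_smul]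
  have hμ : 0 < μ₁ := by rw [hμ₁]; positivity
  have hC_spectral : C = ((μ₁ : ℝ) : ℂ) • P + ((σ2 : ℝ) : ℂ) • (1 - P) := by
    rw [hC, covariance_eq_smul_vecMulVec_add_smul_one, hP, smul_vecMulVec, hμ₁]
    have : (t : ℂ) ≠ 0 := ofReal_ne_zero.2 ht.ne'
    match_scalars
    · field_simp
      ring
    · ring
  have hCD := hP_idem.smul_add_smul_one_sub_mul_inv (ofReal_ne_zero.2 hμ.ne')
    (ofReal_ne_zero.2 hσ.ne')
  rw [← hC_spectral, ← ofReal_inv, ← ofReal_inv, ← hQ] at hCD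
  exact ⟨hQ ▸ hC_spectral, .of_mul_eq_one _ hCD, inv_eq_right_inv hCD⟩
end

section
/- Let σ² > 0 and let S be a 2×2 Hermitian positive semidefinite complex matrix with eigenvalues η₁ ≥ η₂ ≥ 0 and u a unit eigenvector of S for η₁. For μ₁ ≥ σ² and a unit vector e ∈ ℂ², define g(μ₁, e) = −log(π²·μ₁·σ²) + (σ⁻² − μ₁⁻¹)·(e^H S e) − σ⁻²·Tr(S), where e^H S e is real since S is Hermitian. Then for every μ₁ ≥ σ² and every unit vector e ∈ ℂ², g(μ₁, e) ≤ g(max{η₁, σ²}, u). -/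
/-!
`η₁ • 1 - S` is a Hermitian 2×2 matrix with trace `η₁ - η₂ ≥ 0` and determinant `0`, hence
positive semidefinite; this is the Rayleigh–Ritz bound `eᴴ S e ≤ η₁`, attained at `u`. As the
coefficient `σ⁻² - μ₁⁻¹` is nonnegative, the claim reduces to maximizing `μ ↦ -log μ - η₁ / μ`
over `μ ≥ σ²`, and `log x ≤ x - 1` shows that the maximum sits at `max η₁ σ²`.
-/

open Complex Matrix Real
open scoped ComplexOrder

namespace Matrix

lemma dotProduct_mulVec_eq_sum {n R : Type*} [Fintype n] [NonUnitalSemiring R]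
    (v w : n → R) (A : Matrix n n R) :
    v ⬝ᵥ A *ᵥ w = ∑ i, ∑ j, v i * A i j * w j := by
  simp only [dotProduct, mulVec, Finset.mul_sum, mul_assoc]

lemma det_smul_one_sub_fin_two {R : Type*} [CommRing R] (c : R) (A : Matrix (Fin 2) (Fin 2) R) :
    (c • 1 - A).det = c ^ 2 - c * A.trace + A.det := by
  simp only [det_fin_two, trace_fin_two, sub_apply, smul_apply, smul_eq_mul, one_apply_eq,
    one_apply_ne zero_ne_one, one_apply_ne one_ne_zero]
  ring

variable {𝕜 : Type*} [RCLike 𝕜]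

lemma IsHermitian.posSemidef_of_fin_two {A : Matrix (Fin 2) (Fin 2) 𝕜} (hA : A.IsHermitian)
    (htr : 0 ≤ RCLike.re A.trace) (hdet : 0 ≤ RCLike.re A.det) : A.PosSemidef := by
  have hsum : RCLike.re A.trace = hA.eigenvalues 0 + hA.eigenvalues 1 := by
    simp [hA.trace_eq_sum_eigenvalues, Fin.sum_univ_two]
  have hprod : RCLike.re A.det = hA.eigenvalues 0 * hA.eigenvalues 1 := by
    rw [hA.det_eq_prod_eigenvalues, Fin.prod_univ_two, ← RCLike.ofReal_mul, RCLike.ofReal_re]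
  rw [hA.posSemidef_iff_eigenvalues_nonneg, Pi.le_def, Fin.forall_fin_two]
  simp only [Pi.zero_apply]
  constructor <;> nlinarith

lemma IsHermitian.posSemidef_smul_one_sub_of_fin_two {A : Matrix (Fin 2) (Fin 2) 𝕜}
    (hA : A.IsHermitian) {η₁ η₂ : ℝ} (htr : A.trace = ((η₁ + η₂ : ℝ) : 𝕜))
    (hdet : A.det = ((η₁ * η₂ : ℝ) : 𝕜)) (h : η₂ ≤ η₁) :
    ((η₁ : 𝕜) • 1 - A).PosSemidef := by
  have hT : ((η₁ : 𝕜) • 1 - A).IsHermitian := by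
    simp [IsHermitian, conjTranspose_sub, hA.eq]
  refine hT.posSemidef_of_fin_two ?_ ?_
  · simp only [trace_sub, trace_smul, trace_one, Fintype.card_fin, Nat.cast_ofNat, htr,
      smul_eq_mul, map_sub, RCLike.re_ofReal_mul, RCLike.ofNat_re, RCLike.ofReal_re]
    linarith
  · have hzero : (η₁ : 𝕜) ^ 2 - η₁ * ((η₁ + η₂ : ℝ) : 𝕜) + ((η₁ * η₂ : ℝ) : 𝕜) = 0 := by
      push_cast
      ring
    rw [det_smul_one_sub_fin_two, htr, hdet, hzero, map_zero]

lemma re_star_dotProduct_mulVec_le {n : Type*} [Fintype n] [DecidableEq n]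
    {A : Matrix n n 𝕜} {c : ℝ} (h : ((c : 𝕜) • 1 - A).PosSemidef) {e : n → 𝕜}
    (he : star e ⬝ᵥ e = 1) : RCLike.re (star e ⬝ᵥ A *ᵥ e) ≤ c := by
  have hpos := h.dotProduct_mulVec_nonneg e
  rw [sub_mulVec, smul_mulVec, one_mulVec, dotProduct_sub, dotProduct_smul, he] at hpos
  simpa only [smul_eq_mul, mul_one, map_sub, RCLike.ofReal_re, sub_nonneg] using
    (RCLike.nonneg_iff.mp hpos).1

end Matrix

namespace Real

/-- `log x ≤ x - 1` at `x = M / μ`, rearranged. -/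
lemma neg_log_sub_div_le_of_mul_nonneg {η M μ : ℝ} (hM : 0 < M) (hμ : 0 < μ)
    (h : 0 ≤ (μ - M) * (M - η)) : -log μ - η / μ ≤ -log M - η / M := by
  have hlog : log (M / μ) ≤ M / μ - 1 := log_le_sub_one_of_pos (by positivity)
  rw [log_div hM.ne' hμ.ne'] at hlog
  have hgap : 1 - M / μ + (η / μ - η / M) = (μ - M) * (M - η) / (μ * M) := by
    field_simp
    ring
  have : 0 ≤ (μ - M) * (M - η) / (μ * M) := by positivity
  linarith

lemma neg_log_add_inv_sub_mul_le_max {σ2 μ q η : ℝ} (hσ : 0 < σ2) (hμ : σ2 ≤ μ) (hq : q ≤ η) :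
    -log μ + (σ2⁻¹ - μ⁻¹) * q ≤ -log (max η σ2) + (σ2⁻¹ - (max η σ2)⁻¹) * η := by
  have hμpos : 0 < μ := hσ.trans_le hμ
  have hMpos : 0 < max η σ2 := hσ.trans_le (le_max_right _ _)
  have hcoef : 0 ≤ σ2⁻¹ - μ⁻¹ := sub_nonneg.mpr (inv_anti₀ hσ hμ)
  have hprofile : -log μ - η / μ ≤ -log (max η σ2) - η / max η σ2 := by
    refine neg_log_sub_div_le_of_mul_nonneg hMpos hμpos ?_
    rcases le_total σ2 η with hση | hησ
    · simp [max_eq_left hση]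
    · rw [max_eq_right hησ]
      exact mul_nonneg (by linarith) (by linarith)
  have hq' := mul_le_mul_of_nonneg_left hq hcoef
  rw [div_eq_inv_mul, div_eq_inv_mul] at hprofile
  linarith

end Real

theorem stmt3_general (σ2 : ℝ) (hσ : 0 < σ2)
    (S : Matrix (Fin 2) (Fin 2) ℂ) (hS : S.PosSemidef)
    (η₁ η₂ : ℝ) (hη₁₂ : η₂ ≤ η₁)
    (htr : S.trace = ((η₁ + η₂ : ℝ) : ℂ))
    (hdet : S.det = ((η₁ * η₂ : ℝ) : ℂ))
    (u : Fin 2 → ℂ)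
    (hu : ∑ i, (starRingEnd ℂ) (u i) * u i = 1)
    (huev : S.mulVec u = ((η₁ : ℝ) : ℂ) • u)
    (g : ℝ → (Fin 2 → ℂ) → ℝ)
    (hg : ∀ μ₁ e, g μ₁ e = -Real.log (π ^ 2 * μ₁ * σ2)
        + (σ2⁻¹ - μ₁⁻¹) * (∑ i, ∑ j, (starRingEnd ℂ) (e i) * S i j * e j).re
        - σ2⁻¹ * S.trace.re) :
    ∀ μ₁ ≥ σ2, ∀ e : Fin 2 → ℂ, (∑ i, (starRingEnd ℂ) (e i) * e i = 1) →
      g μ₁ e ≤ g (max η₁ σ2) u := by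
  intro μ₁ hμ₁ e he
  have hquad (v : Fin 2 → ℂ) :
      ∑ i, ∑ j, (starRingEnd ℂ) (v i) * S i j * v j = star v ⬝ᵥ S *ᵥ v :=
    (dotProduct_mulVec_eq_sum _ _ _).symm
  have hrayleigh : (star e ⬝ᵥ S *ᵥ e).re ≤ η₁ :=
    re_star_dotProduct_mulVec_le
      (hS.isHermitian.posSemidef_smul_one_sub_of_fin_two htr hdet hη₁₂) he
  have hattained : (star u ⬝ᵥ S *ᵥ u).re = η₁ := by
    rw [huev, dotProduct_smul]
    simp [dotProduct, hu]
  have hlog (μ : ℝ) (hμ : 0 < μ) :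
      Real.log (π ^ 2 * μ * σ2) = Real.log (π ^ 2 * σ2) + Real.log μ := by
    rw [mul_right_comm, Real.log_mul (by positivity) hμ.ne']
  rw [hg, hg, hquad, hquad, hattained, hlog μ₁ (hσ.trans_le hμ₁),
    hlog _ (hσ.trans_le (le_max_right _ _))]
  linarith [neg_log_add_inv_sub_mul_le_max hσ hμ₁ hrayleigh]

/-- Let S be 2×2 Hermitian PSD with eigenvalues η₁ ≥ η₂ ≥ 0 and u a
unit eigenvector for η₁.  For μ₁ ≥ σ² and unit e, set
g(μ₁, e) = −log(π²·μ₁·σ²) + (σ⁻² − μ₁⁻¹)·(eᴴSe) − σ⁻²·Tr(S) (where eᴴSe and Tr S are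
real since S is Hermitian PSD).  Then g(μ₁, e) ≤ g(max{η₁, σ²}, u) for every μ₁ ≥ σ²
and every unit e. -/
theorem stmt3 (σ2 : ℝ) (hσ : 0 < σ2)
    (S : Matrix (Fin 2) (Fin 2) ℂ) (hS : S.PosSemidef)
    (η₁ η₂ : ℝ) (hη₁₂ : η₂ ≤ η₁) (hη₂ : 0 ≤ η₂)
    (htr : S.trace = ((η₁ + η₂ : ℝ) : ℂ))
    (hdet : S.det = ((η₁ * η₂ : ℝ) : ℂ))
    (u : Fin 2 → ℂ)
    (hu : ∑ i, (starRingEnd ℂ) (u i) * u i = 1)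
    (huev : S.mulVec u = ((η₁ : ℝ) : ℂ) • u)
    (g : ℝ → (Fin 2 → ℂ) → ℝ)
    (hg : ∀ μ₁ e, g μ₁ e = -Real.log (π ^ 2 * μ₁ * σ2)
        + (σ2⁻¹ - μ₁⁻¹) * (∑ i, ∑ j, (starRingEnd ℂ) (e i) * S i j * e j).re
        - σ2⁻¹ * S.trace.re) :
    ∀ μ₁ ≥ σ2, ∀ e : Fin 2 → ℂ, (∑ i, (starRingEnd ℂ) (e i) * e i = 1) →
      g μ₁ e ≤ g (max η₁ σ2) u :=
  stmt3_general σ2 hσ S hS η₁ η₂ hη₁₂ htr hdet u hu huev g hg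
end

section
/- Let σ² > 0 and η ≥ 0 be real numbers, and define g(μ) = μ·η/(μ + σ²) − σ²·log(μ + σ²) for μ ≥ 0. Then g attains its maximum over [0, ∞) at μ̂ = max{η − σ², 0}; that is, g(μ) ≤ g(max{η − σ², 0}) for all μ ≥ 0. -/
/-!
Substituting `t = μ + σ²` gives `g μ = η - σ² (η / t + log t)`, so it suffices to minimise
`η / t + log t` over `t ≥ σ²`. With `s = max η σ²`, the tangent bound `log (s / t) ≤ s / t - 1`
reduces this to `(η / s - 1) (1 - s / t) ≤ 0`, where one factor vanishes or the two have
opposite signs.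
-/

open Real

theorem div_add_log_max_le (a : ℝ) {c t : ℝ} (hc : 0 < c) (hct : c ≤ t) :
    a / max a c + log (max a c) ≤ a / t + log t := by
  set s := max a c
  have hs : 0 < s := lt_max_of_lt_right hc
  have ht : 0 < t := hc.trans_le hct
  have hlog : 1 - s / t ≤ log t - log s := by
    have := log_le_sub_one_of_pos (div_pos hs ht)
    rw [log_div hs.ne' ht.ne'] at this
    linarith
  have hprod : (a / s - 1) * (1 - s / t) ≤ 0 := by
    rcases le_total c a with hca | hac
    · have hsa : s = a := max_eq_left hca
      rw [hsa, div_self (hsa ▸ hs).ne', sub_self, zero_mul]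
    · have hsc : s = c := max_eq_right hac
      apply mul_nonpos_of_nonpos_of_nonneg
      · rw [sub_nonpos, div_le_one hs]
        exact le_max_left a c
      · rw [sub_nonneg, div_le_one ht, hsc]
        exact hct
  have hsplit : a / s - a / t = a / s * (1 - s / t) := by field_simp
  linarith

theorem mul_div_add_eq_sub {x c : ℝ} (a : ℝ) (hx : x + c ≠ 0) :
    x * a / (x + c) = a - c * (a / (x + c)) := by
  field_simp
  ring

theorem stmt12_general (σ2 η : ℝ) (hσ : 0 < σ2)
    (g : ℝ → ℝ)
    (hg : ∀ μ : ℝ, g μ = μ * η / (μ + σ2) - σ2 * Real.log (μ + σ2)) :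
    ∀ μ : ℝ, 0 ≤ μ → g μ ≤ g (max (η - σ2) 0) := by
  intro μ hμ
  have hmax : max (η - σ2) 0 + σ2 = max η σ2 := by
    rw [← max_add_add_right, sub_add_cancel, zero_add]
  have hpos : 0 < max η σ2 := lt_max_of_lt_right hσ
  have key := mul_le_mul_of_nonneg_left
    (div_add_log_max_le η hσ (le_add_of_nonneg_left hμ)) hσ.le
  rw [hg, hg, mul_div_add_eq_sub η (by positivity), mul_div_add_eq_sub η (hmax ▸ hpos.ne'), hmax]
  linarith

/-- For σ² > 0, η ≥ 0 and g(μ) = μη/(μ+σ²) − σ²·log(μ+σ²) on [0,∞),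
g attains its maximum at μ̂ = max{η − σ², 0}: g(μ) ≤ g(max{η − σ², 0}) for all μ ≥ 0. -/
theorem stmt12 (σ2 η : ℝ) (hσ : 0 < σ2) (hη : 0 ≤ η)
    (g : ℝ → ℝ)
    (hg : ∀ μ : ℝ, g μ = μ * η / (μ + σ2) - σ2 * Real.log (μ + σ2)) :
    ∀ μ : ℝ, 0 ≤ μ → g μ ≤ g (max (η - σ2) 0) :=
  stmt12_general σ2 η hσ g hg
end
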